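/- Let φ(e^{iθ}) = Σ_{n=-n₀}^{n₀} a_n e^{inθ} with a_{-n} = conj(a_n), and suppose the Laurent polynomial K(z) = Σ_{n=-n₀}^{n₀} a_n z^{n+n₀} has no roots on the unit circle, with exactly n₀ roots (counted with multiplicity) inside the open unit disk. Then φ admits a factorization φ = g₁·g₂ where g₁(χ) = c·∏_j (1 - conj(α_j)·χ)^{s_j}, g₂(χ) = ∏_j (1 - α_j·conj(χ))^{s_j}, the α_j being the roots of K of modulus < 1 with multiplicities s_j, with g₁ and 1/g₁ in H^∞(𝕋), conj(g₂) and 1/conj(g₂) in H^∞(𝕋), and c a nonzero constant. -/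

import Mathlib

/-!
`K(z) = z^{n₀} φ(z)` is self-inversive: Hermitian symmetry of the coefficients says
`K = z^{2n₀} conj(K(1 / conj z))`, so `α ↦ 1 / conj α` permutes the roots of `K` preserving
multiplicities. With no roots on the circle, the roots outside the disk are exactly the images of
the roots `α` inside it, so `K(z) = a_{n₀} ∏ (z - 1 / conj α)^s (z - α)^s`. Writing
`z - 1 / conj α = -(1 / conj α)(1 - conj α z)` and `z - α = z (1 - α z⁻¹)` and dividing by
`z^{n₀}` gives `φ = g₁ g₂` on the circle; the factors are zero-free on the closed disk since
`|α| < 1`.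
-/

open Complex Finset Polynomial

theorem Multiset.filter_not_eq_map_filter {α : Type*} [DecidableEq α] {s : Multiset α}
    {f : α → α} (hf : Function.Involutive f) (hcount : ∀ a, s.count (f a) = s.count a)
    {p : α → Prop} [DecidablePred p] (hp : ∀ a ∈ s, ¬ p a ↔ p (f a)) :
    s.filter (fun a => ¬ p a) = (s.filter p).map f := by
  ext b
  rw [← hf b, Multiset.count_map_eq_count' f _ hf.injective, hf b, Multiset.count_filter,
    Multiset.count_filter, hcount]
  by_cases hb : b ∈ s
  · simp only [hp b hb]
  · simp [Multiset.count_eq_zero_of_notMem hb]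

theorem Multiset.exists_fin_enumeration {α β : Type*} [DecidableEq α] [CommMonoid β]
    (M : Multiset α) :
    ∃ (σ : ℕ) (αs : Fin σ → α), Function.Injective αs ∧ (∀ j, αs j ∈ M) ∧
      ∑ j, M.count (αs j) = Multiset.card M ∧
      ∀ g : α → β, (M.map g).prod = ∏ j, g (αs j) ^ M.count (αs j) := by
  let e := M.toFinset.equivFin.symm
  refine ⟨_, fun j => e j, Subtype.val_injective.comp e.injective,
    fun j => Multiset.mem_toFinset.mp (e j).2, ?_, fun g => ?_⟩
  · exact (e.sum_comp fun x => M.count (x : α)).trans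
      ((Finset.sum_coe_sort _ _).trans (Multiset.toFinset_sum_count_eq M))
  · exact (Finset.prod_multiset_map_count M g).trans
      ((Finset.prod_coe_sort _ _).symm.trans (e.prod_comp _).symm)

namespace Polynomial

theorem reverse_pow {R : Type*} [Semiring R] [NoZeroDivisors R] (f : R[X]) (n : ℕ) :
    (f ^ n).reverse = f.reverse ^ n := by
  induction n with
  | zero => simpa using reverse_C (1 : R)
  | succ n ih => rw [pow_succ, reverse_mul_of_domain, ih, pow_succ]

theorem reverse_X_sub_C {R : Type*} [Ring R] [Nontrivial R] (t : R) :
    (X - C t).reverse = 1 - C t * X := by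
  have hX : (X : R[X]).reverse = 1 := by
    have h := reverse_mul_X (C (1 : R))
    rwa [reverse_C, C_1, one_mul] at h
  rw [sub_eq_add_neg, ← C_neg, reverse_add_C, hX, natDegree_X, C_neg, pow_one, neg_mul,
    ← sub_eq_add_neg]

theorem X_sub_C_pow_dvd_reverse {F : Type*} [Field F] {p : F[X]} {α : F} (hα : α ≠ 0) {n : ℕ}
    (h : (X - C α) ^ n ∣ p) : (X - C α⁻¹) ^ n ∣ p.reverse := by
  obtain ⟨q, rfl⟩ := h
  have hlin : (1 : F[X]) - C α * X = C (-α) * (X - C α⁻¹) := by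
    rw [mul_sub, ← C_mul, neg_mul, mul_inv_cancel₀ hα]
    simp only [C_neg, C_1]
    ring
  rw [reverse_mul_of_domain, reverse_pow, reverse_X_sub_C, hlin, mul_pow, mul_assoc]
  exact dvd_mul_of_dvd_right (dvd_mul_right _ _) _

section SelfInversive

variable {F : Type*} [Field F] [StarRing F] {p : F[X]}

theorem rootMultiplicity_le_rootMultiplicity_star_inv (hp : (p.map (starRingEnd F)).reverse = p)
    (β : F) : p.rootMultiplicity β ≤ p.rootMultiplicity ((starRingEnd F) β)⁻¹ := by
  rcases eq_or_ne p 0 with rfl | hp0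
  · simp
  rcases eq_or_ne β 0 with rfl | hβ
  · simp
  rw [le_rootMultiplicity_iff hp0]
  have h := Polynomial.map_dvd (starRingEnd F) (pow_rootMultiplicity_dvd p β)
  rw [Polynomial.map_pow, Polynomial.map_sub, map_X, map_C] at h
  exact (X_sub_C_pow_dvd_reverse (by simpa using hβ) h).trans (dvd_of_eq hp)

theorem rootMultiplicity_star_inv (hp : (p.map (starRingEnd F)).reverse = p) (β : F) :
    p.rootMultiplicity ((starRingEnd F) β)⁻¹ = p.rootMultiplicity β := by
  refine le_antisymm ?_ (rootMultiplicity_le_rootMultiplicity_star_inv hp β)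
  simpa using rootMultiplicity_le_rootMultiplicity_star_inv hp ((starRingEnd F) β)⁻¹

theorem coeff_zero_ne_zero_of_reverse_map_star (hp : (p.map (starRingEnd F)).reverse = p)
    (hp0 : p ≠ 0) : p.coeff 0 ≠ 0 := by
  rw [← hp, coeff_zero_reverse, leadingCoeff_map]
  simpa using hp0

theorem ne_zero_of_mem_roots_of_reverse_map_star (hp : (p.map (starRingEnd F)).reverse = p)
    {β : F} (hβ : β ∈ p.roots) : β ≠ 0 := by
  rintro rfl
  have hp0 := ne_zero_of_mem_roots hβ
  refine coeff_zero_ne_zero_of_reverse_map_star hp hp0 ?_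
  rw [coeff_zero_eq_eval_zero]
  exact (mem_roots hp0).mp hβ

end SelfInversive

theorem roots_eq_filter_add_map_star_inv {p : ℂ[X]} (hp : (p.map (starRingEnd ℂ)).reverse = p)
    (hunit : ∀ z, p.IsRoot z → ‖z‖ ≠ 1) :
    p.roots = p.roots.filter (‖·‖ < 1) +
      (p.roots.filter (‖·‖ < 1)).map fun z => ((starRingEnd ℂ) z)⁻¹ := by
  conv_lhs => rw [← Multiset.filter_add_not (‖·‖ < 1) p.roots]
  congr 1
  refine Multiset.filter_not_eq_map_filter (fun z => by simp) (fun z => ?_) fun z hz => ?_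
  · rw [count_roots, count_roots, rootMultiplicity_star_inv hp]
  · have hz0 : 0 < ‖z‖ := norm_pos_iff.mpr (ne_zero_of_mem_roots_of_reverse_map_star hp hz)
    rw [norm_inv, RCLike.norm_conj, inv_lt_one₀ hz0, not_lt]
    exact (hunit z (isRoot_of_mem_roots hz)).symm.le_iff_lt

theorem eval_eq_of_roots_eq_add_map_star_inv {p : ℂ[X]} {M : Multiset ℂ}
    (hroots : p.roots = M + M.map fun z => ((starRingEnd ℂ) z)⁻¹) (hM : ∀ α ∈ M, α ≠ 0)
    {w : ℂ} (hw : w ≠ 0) :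
    p.eval w = w ^ Multiset.card M *
      ((p.leadingCoeff * (M.map fun α => -((starRingEnd ℂ) α)⁻¹).prod *
        (M.map fun α => 1 - (starRingEnd ℂ) α * w).prod) *
        (M.map fun α => 1 - α * w⁻¹).prod) := by
  have houter : (M.map fun α => w - ((starRingEnd ℂ) α)⁻¹).prod =
      (M.map fun α => -((starRingEnd ℂ) α)⁻¹).prod *
        (M.map fun α => 1 - (starRingEnd ℂ) α * w).prod := by
    rw [← Multiset.prod_map_mul]
    refine congrArg _ (Multiset.map_congr rfl fun α hα => ?_)
    have : (starRingEnd ℂ) α ≠ 0 := by simpa using hM α hα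
    field_simp
    ring
  have hinner : (M.map fun α => w - α).prod =
      w ^ Multiset.card M * (M.map fun α => 1 - α * w⁻¹).prod := by
    rw [show w ^ Multiset.card M = (M.map fun _ => w).prod by simp, ← Multiset.prod_map_mul]
    refine congrArg _ (Multiset.map_congr rfl fun α _ => ?_)
    field_simp
  rw [(IsAlgClosed.splits p).eval_eq_prod_roots, hroots, Multiset.map_add, Multiset.prod_add,
    Multiset.map_map]
  simp only [Function.comp_def]
  rw [houter, hinner]
  ring

end Polynomial

theorem one_sub_mul_ne_zero_of_norm_lt {𝕜 : Type*} [NormedDivisionRing 𝕜] {β z : 𝕜}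
    (hβ : ‖β‖ < 1) (hz : ‖z‖ ≤ 1) : 1 - β * z ≠ 0 := by
  intro h
  have hlt : ‖β * z‖ < 1 := by
    rw [norm_mul]
    exact (mul_le_of_le_one_right (norm_nonneg β) hz).trans_lt hβ
  rw [← sub_eq_zero.mp h, norm_one] at hlt
  exact hlt.false

section BandPoly

-- `K(z) = z^{n₀} φ(z)` for the symbol `φ(z) = ∑_{|n| ≤ n₀} a n zⁿ`
noncomputable def bandPoly {R : Type*} [Semiring R] (n₀ : ℕ) (a : ℤ → R) : R[X] :=
  ∑ j ∈ range (2 * n₀ + 1), C (a ((j : ℤ) - (n₀ : ℤ))) * X ^ j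

variable {R : Type*} [Semiring R] {n₀ : ℕ} {a : ℤ → R}

theorem coeff_bandPoly (m : ℕ) :
    (bandPoly n₀ a).coeff m = if m ≤ 2 * n₀ then a ((m : ℤ) - n₀) else 0 := by
  simp only [bandPoly, finsetSum_coeff, coeff_C_mul, coeff_X_pow, mul_ite, mul_one, mul_zero,
    Finset.sum_ite_eq, mem_range, Nat.lt_succ_iff]

theorem natDegree_bandPoly (htop : a n₀ ≠ 0) : (bandPoly n₀ a).natDegree = 2 * n₀ := by
  refine le_antisymm (natDegree_le_iff_coeff_eq_zero.mpr fun m hm => ?_)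
    (le_natDegree_of_ne_zero ?_)
  · rw [coeff_bandPoly, if_neg (by omega)]
  · rwa [coeff_bandPoly, if_pos le_rfl, show ((2 * n₀ : ℕ) : ℤ) - n₀ = n₀ by omega]

theorem leadingCoeff_bandPoly (htop : a n₀ ≠ 0) : (bandPoly n₀ a).leadingCoeff = a n₀ := by
  rw [leadingCoeff, natDegree_bandPoly htop, coeff_bandPoly, if_pos le_rfl,
    show ((2 * n₀ : ℕ) : ℤ) - n₀ = n₀ by omega]

theorem reverse_map_star_bandPoly {R : Type*} [CommSemiring R] [StarRing R] {a : ℤ → R}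
    (hherm : ∀ n, a (-n) = (starRingEnd R) (a n)) (htop : a n₀ ≠ 0) :
    ((bandPoly n₀ a).map (starRingEnd R)).reverse = bandPoly n₀ a := by
  ext m
  rw [coeff_reverse, natDegree_map_eq_of_injective star_injective, natDegree_bandPoly htop,
    coeff_map]
  by_cases hm : m ≤ 2 * n₀
  · rw [revAt_le hm, coeff_bandPoly, coeff_bandPoly, if_pos (by omega), if_pos hm,
      show ((2 * n₀ - m : ℕ) : ℤ) - n₀ = -((m : ℤ) - n₀) by omega, hherm, starRingEnd_self_apply]
  · rw [revAt_eq_self_of_lt (by omega), coeff_bandPoly, if_neg hm, map_zero]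

theorem eval_bandPoly {F : Type*} [Field F] {a : ℤ → F} {w : F} (hw : w ≠ 0) :
    (bandPoly n₀ a).eval w = w ^ n₀ * ∑ n ∈ Icc (-(n₀ : ℤ)) n₀, a n * w ^ n := by
  rw [bandPoly, eval_finsetSum, mul_sum]
  refine Finset.sum_nbij' (fun j => (j : ℤ) - n₀) (fun n => (n + n₀).toNat) ?_ ?_ ?_ ?_ ?_
  · intro j hj
    simp only [mem_range, mem_Icc] at hj ⊢
    omega
  · intro n hn
    simp only [mem_range, mem_Icc] at hn ⊢
    omega
  · intro j _
    omega
  · intro n hn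
    simp only [mem_Icc] at hn
    omega
  · intro j _
    rw [eval_C_mul, eval_X_pow, zpow_sub₀ hw, zpow_natCast, zpow_natCast]
    field_simp

end BandPoly

theorem banded_symbol_factorization_general
    (n₀ : ℕ) (a : ℤ → ℂ)
    (hherm : ∀ n : ℤ, a (-n) = (starRingEnd ℂ) (a n))
    (htop : a (n₀ : ℤ) ≠ 0)
    (K : Polynomial ℂ)
    (hK : K = ∑ j ∈ Finset.range (2 * n₀ + 1), Polynomial.C (a ((j : ℤ) - (n₀ : ℤ))) * X ^ j)
    (hNoUnitRoots : ∀ z : ℂ, K.IsRoot z → ‖z‖ ≠ 1)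
    (hInside : Multiset.card (K.roots.filter (fun z => ‖z‖ < 1)) = n₀) :
    ∃ (σ : ℕ) (αs : Fin σ → ℂ) (s : Fin σ → ℕ) (c : ℂ),
      c ≠ 0 ∧
      Function.Injective αs ∧
      (∀ j, ‖αs j‖ < 1) ∧
      (∀ j, K.roots.count (αs j) = s j) ∧
      (∑ j, s j) = n₀ ∧
      -- `g₁` and `1/g₁` in `H^∞`: the analytic factor is zero-free on the closed disk
      (∀ z : ℂ, ‖z‖ ≤ 1 →
        c * ∏ j, (1 - (starRingEnd ℂ) (αs j) * z) ^ (s j) ≠ 0) ∧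
      -- `conj g₂` and `1/conj g₂` in `H^∞`: likewise zero-free on the closed disk
      (∀ z : ℂ, ‖z‖ ≤ 1 →
        (∏ j, (1 - αs j * z) ^ (s j)) ≠ 0) ∧
      -- the factorization `φ = g₁ · g₂` on the circle
      (∀ θ : ℝ,
        (∑ n ∈ Finset.Icc (-(n₀ : ℤ)) (n₀ : ℤ), a n * Complex.exp ((n : ℂ) * θ * Complex.I)) =
          (c * ∏ j, (1 - (starRingEnd ℂ) (αs j) * Complex.exp (θ * Complex.I)) ^ (s j)) *
          (∏ j, (1 - αs j * Complex.exp (-(θ * Complex.I))) ^ (s j))) := by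
  replace hK : K = bandPoly n₀ a := hK
  subst hK
  set M := (bandPoly n₀ a).roots.filter (‖·‖ < 1)
  have hself := reverse_map_star_bandPoly hherm htop
  have hroots := roots_eq_filter_add_map_star_inv hself hNoUnitRoots
  have hM0 : ∀ α ∈ M, α ≠ 0 := fun α hα =>
    ne_zero_of_mem_roots_of_reverse_map_star hself (Multiset.mem_of_mem_filter hα)
  obtain ⟨σ, αs, hinj, hmem, hcard, hprod⟩ := M.exists_fin_enumeration (β := ℂ)
  have hin : ∀ j, ‖αs j‖ < 1 := fun j => (Multiset.mem_filter.mp (hmem j)).2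
  set c := a n₀ * (M.map fun α => -((starRingEnd ℂ) α)⁻¹).prod
  have hc : c ≠ 0 := by
    refine mul_ne_zero htop (Multiset.prod_ne_zero fun h0 => ?_)
    obtain ⟨α, hα, hzero⟩ := Multiset.mem_map.mp h0
    exact hM0 α hα (by simpa using hzero)
  refine ⟨σ, αs, fun j => M.count (αs j), c, hc, hinj, hin,
    fun j => (Multiset.count_filter_of_pos (p := (‖·‖ < 1)) (hin j)).symm, hcard.trans hInside,
    fun z hz => mul_ne_zero hc (prod_ne_zero_iff.mpr fun j _ => pow_ne_zero _
      (one_sub_mul_ne_zero_of_norm_lt (by simpa using hin j) hz)),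
    fun z hz => prod_ne_zero_iff.mpr fun j _ => pow_ne_zero _
      (one_sub_mul_ne_zero_of_norm_lt (hin j) hz), fun θ => ?_⟩
  simp only [mul_assoc _ (θ : ℂ), Complex.exp_int_mul, Complex.exp_neg]
  set w := Complex.exp (θ * Complex.I)
  have hw : w ≠ 0 := Complex.exp_ne_zero _
  have hfactor := (eval_bandPoly hw).symm.trans (eval_eq_of_roots_eq_add_map_star_inv hroots hM0 hw)
  rw [hInside, leadingCoeff_bandPoly htop, hprod fun α => 1 - _ * w, hprod fun α => 1 - α * w⁻¹]
    at hfactor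
  exact mul_left_cancel₀ (pow_ne_zero _ hw) hfactor

/-- Wiener–Hopf factorization of a Hermitian banded symbol: if
`K(z) = Σ a_n z^{n+n₀}` has no unit-modulus roots and exactly `n₀` roots inside the unit
disk, then `φ = g₁·g₂` with `g₁(χ) = c∏(1-conj(α_j)χ)^{s_j}`, `g₂(χ) = ∏(1-α_j conj χ)^{s_j}`,
both `g₁, 1/g₁` and `conj g₂, 1/conj g₂` lying in `H^∞(𝕋)` (here: the analytic factors are
nonvanishing on the closed unit disk). -/
theorem banded_symbol_factorization
    (n₀ : ℕ) (hn₀ : 1 ≤ n₀) (a : ℤ → ℂ)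
    (hsupp : ∀ n : ℤ, (n₀ : ℤ) < |n| → a n = 0)
    (hherm : ∀ n : ℤ, a (-n) = (starRingEnd ℂ) (a n))
    (htop : a (n₀ : ℤ) ≠ 0)
    (K : Polynomial ℂ)
    (hK : K = ∑ j ∈ Finset.range (2 * n₀ + 1), Polynomial.C (a ((j : ℤ) - (n₀ : ℤ))) * X ^ j)
    (hNoUnitRoots : ∀ z : ℂ, K.IsRoot z → ‖z‖ ≠ 1)
    (hInside : Multiset.card (K.roots.filter (fun z => ‖z‖ < 1)) = n₀) :
    ∃ (σ : ℕ) (αs : Fin σ → ℂ) (s : Fin σ → ℕ) (c : ℂ),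
      c ≠ 0 ∧
      Function.Injective αs ∧
      (∀ j, ‖αs j‖ < 1) ∧
      (∀ j, K.roots.count (αs j) = s j) ∧
      (∑ j, s j) = n₀ ∧
      -- `g₁` and `1/g₁` in `H^∞`: the analytic factor is zero-free on the closed disk
      (∀ z : ℂ, ‖z‖ ≤ 1 →
        c * ∏ j, (1 - (starRingEnd ℂ) (αs j) * z) ^ (s j) ≠ 0) ∧
      -- `conj g₂` and `1/conj g₂` in `H^∞`: likewise zero-free on the closed disk
      (∀ z : ℂ, ‖z‖ ≤ 1 →
        (∏ j, (1 - αs j * z) ^ (s j)) ≠ 0) ∧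
      -- the factorization `φ = g₁ · g₂` on the circle
      (∀ θ : ℝ,
        (∑ n ∈ Finset.Icc (-(n₀ : ℤ)) (n₀ : ℤ), a n * Complex.exp ((n : ℂ) * θ * Complex.I)) =
          (c * ∏ j, (1 - (starRingEnd ℂ) (αs j) * Complex.exp (θ * Complex.I)) ^ (s j)) *
          (∏ j, (1 - αs j * Complex.exp (-(θ * Complex.I))) ^ (s j))) :=
  banded_symbol_factorization_general n₀ a hherm htop K hK hNoUnitRoots hInside
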